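/- arXiv:2211.06057 — 5 statements merged into one kernel-verified Lean document; each statement's English description precedes it below -/
import Mathlib

section
/- Let m ∈ ℕ and let f : ℂ₊ → ℂ be holomorphic on the upper half-plane ℂ₊ = {z ∈ ℂ : Im z > 0}. Define g : ℂ₊ → ℂ by g(w) := w^m · f(−1/w) (note −1/w ∈ ℂ₊ for w ∈ ℂ₊, so g is holomorphic on ℂ₊). Then for every z ∈ ℂ₊ the (m+1)-st complex derivative of g satisfies g^{(m+1)}(z) = z^{−(m+2)} · f^{(m+1)}(−1/z), where f^{(m+1)} denotes the (m+1)-st complex derivative of f on ℂ₊. -/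
/-!
Induction on `m`, with `g_m w = w ^ m * f (-1 / w)`. Since `g_{m+1} w = w * g_m w`, Leibniz's
rule gives `g_{m+1}^{(m+2)} = w * g_m^{(m+2)} + (m + 2) * g_m^{(m+1)}`. Differentiating the
induction hypothesis `g_m^{(m+1)} w = w ^ (-(m+2)) * f^{(m+1)} (-1 / w)` once more, using
`(-1 / w)' = w ^ (-2)`, the two terms containing `f^{(m+1)}` cancel. The induction is run under the
open condition that `f` be analytic at `-1 / z`, so the hypothesis holds near `z` and may be
differentiated there.
-/

open Filter Topology

section

variable {𝕜 : Type*} [NontriviallyNormedField 𝕜]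

theorem iteratedDeriv_succ_fun_id_mul {h : 𝕜 → 𝕜} {x : 𝕜} (n : ℕ)
    (hh : ContDiffAt 𝕜 (n + 1) h x) :
    iteratedDeriv (n + 1) (fun w => w * h w) x
      = x * iteratedDeriv (n + 1) h x + (n + 1) * iteratedDeriv n h x := by
  rw [iteratedDeriv_fun_mul (f := fun w => w) contDiffAt_id hh, Finset.sum_range_succ',
    Finset.sum_range_succ']
  simp [iteratedDeriv_fun_id]
  ring

theorem HasDerivAt.zpow_mul_comp_neg_inv {F : 𝕜 → 𝕜} {F' z : 𝕜} (hz : z ≠ 0)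
    (hF : HasDerivAt F F' (-1 / z)) (k : ℤ) :
    HasDerivAt (fun w => w ^ k * F (-1 / w))
      (k * z ^ (k - 1) * F (-1 / z) + z ^ (k - 2) * F') z := by
  have hinv : HasDerivAt (fun w : 𝕜 => -1 / w) (z ^ 2)⁻¹ z := by
    simpa [neg_div, one_div, Pi.neg_def] using (hasDerivAt_inv hz).neg
  refine ((hasDerivAt_zpow k z (Or.inl hz)).mul (hF.comp z hinv)).congr_deriv ?_
  simp only [zpow_sub₀ hz, zpow_one, zpow_two, Function.comp_apply]
  ring

variable [CompleteSpace 𝕜]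

theorem AnalyticAt.hasDerivAt_iteratedDeriv {f : 𝕜 → 𝕜} {x : 𝕜} (hf : AnalyticAt 𝕜 f x)
    (n : ℕ) : HasDerivAt (iteratedDeriv n f) (iteratedDeriv (n + 1) f x) x := by
  rw [iteratedDeriv_succ, iteratedDeriv_eq_iterate]
  exact (hf.iterated_deriv n).differentiableAt.hasDerivAt

theorem iteratedDeriv_pow_mul_comp_neg_inv {f : 𝕜 → 𝕜} (n : ℕ) {z : 𝕜}
    (hz : z ≠ 0) (hf : AnalyticAt 𝕜 f (-1 / z)) :
    iteratedDeriv (n + 1) (fun w => w ^ n * f (-1 / w)) z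
      = z ^ (-(n + 2 : ℤ)) * iteratedDeriv (n + 1) f (-1 / z) := by
  induction n generalizing z with
  | zero =>
    simpa using ((hf.hasDerivAt_iteratedDeriv 0).zpow_mul_comp_neg_inv hz 0).deriv
  | succ n ih =>
    set F := iteratedDeriv (n + 1) f
    have hnear : ∀ᶠ w in 𝓝 z, w ≠ 0 ∧ AnalyticAt 𝕜 f (-1 / w) :=
      (eventually_ne_nhds hz).and
        ((continuousAt_const.div continuousAt_id hz).eventually hf.eventually_analyticAt)
    have hD : iteratedDeriv (n + 1) (fun w => w ^ n * f (-1 / w))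
        =ᶠ[𝓝 z] fun w => w ^ (-(n + 2 : ℤ)) * F (-1 / w) :=
      hnear.mono fun w hw => ih hw.1 hw.2
    have hD' : iteratedDeriv (n + 2) (fun w => w ^ n * f (-1 / w)) z
        = ((-(n + 2 : ℤ) : ℤ) : 𝕜) * z ^ (-(n + 2 : ℤ) - 1) * F (-1 / z)
          + z ^ (-(n + 2 : ℤ) - 2) * iteratedDeriv (n + 2) f (-1 / z) := by
      rw [iteratedDeriv_succ, hD.deriv_eq]
      exact ((hf.hasDerivAt_iteratedDeriv (n + 1)).zpow_mul_comp_neg_inv hz _).deriv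
    have hg : AnalyticAt 𝕜 (fun w => w ^ n * f (-1 / w)) z :=
      (analyticAt_id.pow n).mul (hf.comp (analyticAt_const.div analyticAt_id hz))
    calc iteratedDeriv (n + 2) (fun w => w ^ (n + 1) * f (-1 / w)) z
        = iteratedDeriv (n + 2) (fun w => w * (w ^ n * f (-1 / w))) z := by
          simp only [pow_succ', mul_assoc]
      _ = z * iteratedDeriv (n + 2) (fun w => w ^ n * f (-1 / w)) z
          + (n + 2) * iteratedDeriv (n + 1) (fun w => w ^ n * f (-1 / w)) z := by
          rw [iteratedDeriv_succ_fun_id_mul _ hg.contDiffAt]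
          push_cast
          ring
      _ = z ^ (-(n + 1 + 2 : ℤ)) * iteratedDeriv (n + 2) f (-1 / z) := by
          rw [hD', ih hz hf]
          simp only [zpow_sub₀ hz, zpow_neg, zpow_add₀ hz]
          push_cast
          field_simp
          ring

end

/-- the (m+1)-st derivative intertwines the weighted actions of the
inversion `z ↦ -1/z` on the upper half-plane. -/
theorem stmt_4 (m : ℕ) (f : ℂ → ℂ)
    (hf : DifferentiableOn ℂ f {z : ℂ | 0 < z.im})
    (g : ℂ → ℂ) (hg : ∀ w : ℂ, g w = w ^ m * f (-1 / w)) :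
    ∀ z : ℂ, 0 < z.im →
      iteratedDeriv (m + 1) g z
        = z ^ (-(m + 2 : ℤ)) * iteratedDeriv (m + 1) f (-1 / z) := by
  intro z hz
  have hz0 : z ≠ 0 := by rintro rfl; simp at hz
  have hinv : 0 < (-1 / z).im := by
    simpa using UpperHalfPlane.im_pnat_div_pos 1 ⟨z, hz⟩
  rw [show g = fun w => w ^ m * f (-1 / w) from funext hg]
  exact iteratedDeriv_pow_mul_comp_neg_inv m hz0
    (hf.analyticAt (UpperHalfPlane.isOpen_upperHalfPlaneSet.mem_nhds hinv))
end

section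
/- Let n ∈ ℕ and let 𝒰_{n+1} := {(ζ,z) ∈ ℂ^n × ℂ : Im z > ‖ζ‖²} be the Siegel upper half-space. Let A : ℂ^n × ℂ → ℂ^n × ℂ be a ℂ-linear bijection with A(𝒰_{n+1}) = 𝒰_{n+1}. Then there exist R > 0 and a unitary operator U on ℂ^n such that A(ζ,z) = (R·Uζ, R²·z) for all (ζ,z); conversely, every map of this form is a linear bijection preserving 𝒰_{n+1}. -/
/-!
Write `h (ζ, z) = Im z - ‖ζ‖²`, so that `𝒰 = {h > 0}`. By the parallelogram law the only lines
contained in `𝒰` are parallel to the real `z`-axis; a linear automorphism maps such lines to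
such lines, so `A (0, 1) = (0, c)` with `c` real. Moving a point along `(0, i)` raises `h` by
`t` and `h` of its image by `c t`; as `A` preserves the sign of `h`, this forces `c > 0` and
`h ∘ A = c h`. At the points `(ζ, 0)`, writing `A (ζ, 0) = (T ζ, μ ζ)`, this reads
`Im μ ζ = ‖T ζ‖² - c ‖ζ‖²`. The right side is invariant under `ζ ↦ -ζ` and `ζ ↦ i ζ`, so the
linear form `μ` vanishes and `T / √c` is unitary.
-/

noncomputable section

open Complex

/-- The Siegel upper half-space `𝒰_{n+1}`. -/
def SiegelU (n : ℕ) : Set (EuclideanSpace ℂ (Fin n) × ℂ) :=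
  {w | ‖w.1‖ ^ 2 < w.2.im}

lemma Set.image_eq_self_iff_forall_mem_iff {α : Type*} {f : α → α} (hf : Function.Bijective f)
    {s : Set α} : f '' s = s ↔ ∀ p, f p ∈ s ↔ p ∈ s := by
  rw [← Set.eq_preimage_iff_image_eq hf, Set.ext_iff]
  exact forall_congr' fun _ => Iff.comm

lemma eq_zero_of_forall_pos_add_mul {a b : ℝ} (h : ∀ t : ℝ, 0 < a + t * b) : b = 0 := by
  by_contra hb
  simpa [div_mul_cancel₀ _ hb] using h (-a / b)

lemma eq_zero_of_forall_pos_sub_sq_mul {a b : ℝ} (hb : 0 ≤ b)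
    (h : ∀ t : ℝ, 0 < a - t ^ 2 * b) : b = 0 := by
  by_contra hb0
  have hbpos : 0 < b := lt_of_le_of_ne hb (Ne.symm hb0)
  have ha : 0 < a := by simpa using h 0
  have := h √(a / b)
  rw [Real.sq_sqrt (by positivity), div_mul_cancel₀ _ hb0, sub_self] at this
  exact this.false

lemma pos_and_eq_mul_of_forall_pos_iff {a b c : ℝ}
    (h : ∀ t : ℝ, 0 < a + c * t ↔ 0 < b + t) : 0 < c ∧ a = c * b := by
  have h1 : a + c * -b ≤ 0 := by simpa using (h (-b)).not
  have h2 : 0 < a + c * (1 - b) := (h (1 - b)).2 (by linarith)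
  have hc : 0 < c := by nlinarith
  have h3 : b * c ≤ a := by
    have := (h (-a / c)).not
    rw [mul_div_cancel₀ _ hc.ne', add_neg_cancel, lt_self_iff_false, not_false_eq_true,
      true_iff, not_lt, neg_div, ← sub_eq_add_neg, sub_nonpos, le_div_iff₀ hc] at this
    exact this
  exact ⟨hc, by nlinarith⟩

lemma LinearMap.eq_zero_of_forall_im_eq_zero {E : Type*} [AddCommGroup E] [Module ℂ E]
    (μ : E →ₗ[ℂ] ℂ) (h : ∀ ζ, (μ ζ).im = 0) : μ = 0 := by
  refine LinearMap.ext fun ζ => Complex.ext ?_ (h ζ)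
  simpa using h (I • ζ)

section

variable {V : Type*} [NormedAddCommGroup V] [InnerProductSpace ℂ V]

def siegelHeight (w : V × ℂ) : ℝ := w.2.im - ‖w.1‖ ^ 2

lemma mem_siegelU_iff {n : ℕ} (w : EuclideanSpace ℂ (Fin n) × ℂ) :
    w ∈ SiegelU n ↔ 0 < siegelHeight w := by
  simp [SiegelU, siegelHeight]

lemma siegelHeight_add_ofReal_smul_I (p : V × ℂ) (t : ℝ) :
    siegelHeight (p + (t : ℂ) • ((0 : V), I)) = siegelHeight p + t := by
  simp only [siegelHeight, Prod.smul_mk, smul_zero, smul_eq_mul, Prod.snd_add, Prod.fst_add,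
    add_im, mul_im, ofReal_re, ofReal_im, I_re, I_im, mul_one, mul_zero, add_zero]
  ring

lemma siegelHeight_add_smul_add_siegelHeight_sub_smul (q v : V × ℂ) (t : ℝ) :
    siegelHeight (q + (t : ℂ) • v) + siegelHeight (q - (t : ℂ) • v)
      = 2 * (siegelHeight q - t ^ 2 * ‖v.1‖ ^ 2) := by
  have := parallelogram_law_with_norm ℂ q.1 ((t : ℂ) • v.1)
  simp only [siegelHeight, Prod.fst_add, Prod.snd_add, Prod.fst_sub, Prod.snd_sub, Prod.smul_fst,
    Prod.smul_snd, add_im, sub_im, norm_smul, norm_real, Real.norm_eq_abs, mul_pow,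
    sq_abs] at this ⊢
  linarith

lemma fst_eq_zero_and_im_eq_zero_of_forall_siegelHeight_pos {q v : V × ℂ}
    (h : ∀ t : ℝ, 0 < siegelHeight (q + (t : ℂ) • v)) : v.1 = 0 ∧ v.2.im = 0 := by
  have hv1 : v.1 = 0 := by
    refine norm_eq_zero.1 (pow_eq_zero_iff two_ne_zero |>.1 ?_)
    refine eq_zero_of_forall_pos_sub_sq_mul (a := siegelHeight q) (by positivity) fun t => ?_
    have hsum := siegelHeight_add_smul_add_siegelHeight_sub_smul q v t
    have hneg := h (-t)
    simp only [ofReal_neg, neg_smul, ← sub_eq_add_neg] at hneg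
    linarith [h t]
  refine ⟨hv1, eq_zero_of_forall_pos_add_mul (a := siegelHeight q) fun t => ?_⟩
  have := h t
  simp only [siegelHeight, Prod.fst_add, Prod.snd_add, Prod.smul_fst, Prod.smul_snd, hv1,
    smul_zero, add_zero, add_im, smul_eq_mul, im_ofReal_mul] at this ⊢
  linarith

def siegelDilation (R : ℝ) (U : V ≃ₗᵢ[ℂ] V) : V × ℂ →ₗ[ℂ] V × ℂ :=
  ((R : ℂ) • U.toLinearMap).prodMap ((R : ℂ) ^ 2 • LinearMap.id)

lemma siegelDilation_apply (R : ℝ) (U : V ≃ₗᵢ[ℂ] V) (w : V × ℂ) :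
    siegelDilation R U w = ((R : ℂ) • U w.1, (R : ℂ) ^ 2 * w.2) :=
  rfl

lemma siegelHeight_siegelDilation (R : ℝ) (U : V ≃ₗᵢ[ℂ] V) (w : V × ℂ) :
    siegelHeight (siegelDilation R U w) = R ^ 2 * siegelHeight w := by
  simp only [siegelDilation_apply, siegelHeight, norm_smul, norm_real, Real.norm_eq_abs,
    LinearIsometryEquiv.norm_map, mul_pow, sq_abs, ← ofReal_pow, im_ofReal_mul]
  ring

lemma siegelDilation_bijective {R : ℝ} (hR : R ≠ 0) (U : V ≃ₗᵢ[ℂ] V) :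
    Function.Bijective (siegelDilation R U) := by
  have hR' : (R : ℂ) ≠ 0 := ofReal_ne_zero.2 hR
  have hR2 : (R : ℂ) ^ 2 ≠ 0 := pow_ne_zero 2 hR'
  refine Function.bijective_iff_has_inverse.2
    ⟨siegelDilation R⁻¹ U.symm, fun w => ?_, fun w => ?_⟩ <;> ext <;>
    simp only [siegelDilation_apply, map_smul, LinearIsometryEquiv.symm_apply_apply,
      LinearIsometryEquiv.apply_symm_apply, smul_smul, ← mul_assoc, ofReal_inv, inv_pow,
      inv_mul_cancel₀ hR', mul_inv_cancel₀ hR', inv_mul_cancel₀ hR2, mul_inv_cancel₀ hR2,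
      one_smul, one_mul]

lemma exists_apply_inr_one_eq_ofReal {L : V × ℂ →ₗ[ℂ] V × ℂ}
    (hL : ∀ p, 0 < siegelHeight (L p) ↔ 0 < siegelHeight p) :
    ∃ c : ℝ, L (0, 1) = (0, (c : ℂ)) := by
  obtain ⟨h1, h2⟩ := fst_eq_zero_and_im_eq_zero_of_forall_siegelHeight_pos
    (q := L (0, I)) (v := L (0, 1)) fun t => by
      rw [← map_smul, ← map_add, hL]
      simp [siegelHeight]
  exact ⟨(L (0, 1)).2.re, Prod.ext h1 (Complex.ext rfl (by simpa using h2))⟩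

lemma pos_and_siegelHeight_map_eq_mul {L : V × ℂ →ₗ[ℂ] V × ℂ}
    (hL : ∀ p, 0 < siegelHeight (L p) ↔ 0 < siegelHeight p) {c : ℝ}
    (hc : L (0, 1) = (0, (c : ℂ))) : 0 < c ∧ ∀ p, siegelHeight (L p) = c * siegelHeight p := by
  have hshift (p : V × ℂ) (t : ℝ) :
      siegelHeight (L (p + (t : ℂ) • ((0 : V), I))) = siegelHeight (L p) + c * t := by
    have : ((0 : V), I) = I • ((0 : V), (1 : ℂ)) := by simp
    rw [this, map_add, map_smul, map_smul, hc]
    simp only [siegelHeight, Prod.smul_mk, smul_zero, smul_eq_mul, Prod.snd_add, Prod.fst_add,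
      add_im, mul_im, mul_re, ofReal_re, ofReal_im, I_re, I_im, mul_zero, zero_mul, one_mul,
      zero_add, sub_self, add_zero]
    ring
  have key (p : V × ℂ) : 0 < c ∧ siegelHeight (L p) = c * siegelHeight p :=
    pos_and_eq_mul_of_forall_pos_iff fun t => by
      rw [← hshift, hL, siegelHeight_add_ofReal_smul_I]
  exact ⟨(key 0).1, fun p => (key p).2⟩

lemma exists_eq_prod_map_of_forall_siegelHeight_pos_iff {L : V × ℂ →ₗ[ℂ] V × ℂ}
    (hL : ∀ p, 0 < siegelHeight (L p) ↔ 0 < siegelHeight p) :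
    ∃ c : ℝ, 0 < c ∧ ∃ T : V →ₗ[ℂ] V,
      (∀ ζ, ‖T ζ‖ ^ 2 = c * ‖ζ‖ ^ 2) ∧ ∀ ζ z, L (ζ, z) = (T ζ, c * z) := by
  obtain ⟨c, hc⟩ := exists_apply_inr_one_eq_ofReal hL
  obtain ⟨hc0, hmul⟩ := pos_and_siegelHeight_map_eq_mul hL hc
  set T := LinearMap.fst ℂ V ℂ ∘ₗ L ∘ₗ LinearMap.inl ℂ V ℂ
  set μ := LinearMap.snd ℂ V ℂ ∘ₗ L ∘ₗ LinearMap.inl ℂ V ℂ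
  have hμT (ζ : V) : (μ ζ).im = ‖T ζ‖ ^ 2 - c * ‖ζ‖ ^ 2 := by
    have := hmul (ζ, 0)
    simp only [siegelHeight, zero_im, zero_sub] at this
    simp only [μ, T, LinearMap.comp_apply, LinearMap.inl_apply, LinearMap.fst_apply,
      LinearMap.snd_apply]
    linarith
  have hμ : μ = 0 := LinearMap.eq_zero_of_forall_im_eq_zero μ fun ζ => by
    have := hμT (-ζ)
    simp only [map_neg, neg_im, norm_neg] at this
    linarith [hμT ζ]
  refine ⟨c, hc0, T, fun ζ => ?_, fun ζ z => ?_⟩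
  · have := hμT ζ
    rw [hμ, LinearMap.zero_apply, zero_im] at this
    linarith
  have hμζ : (L (ζ, 0)).2 = 0 := LinearMap.congr_fun hμ ζ
  have hsplit : ((ζ, z) : V × ℂ) = LinearMap.inl ℂ V ℂ ζ + z • ((0 : V), (1 : ℂ)) := by simp
  rw [hsplit, map_add, map_smul, hc]
  ext
  · simp [T]
  · simp [hμζ, mul_comm]

lemma exists_linearIsometryEquiv_eq_smul [FiniteDimensional ℂ V] (T : V →ₗ[ℂ] V) {R : ℝ}
    (hR : 0 < R) (hT : ∀ ζ, ‖T ζ‖ = R * ‖ζ‖) :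
    ∃ U : V ≃ₗᵢ[ℂ] V, ∀ ζ, T ζ = (R : ℂ) • U ζ := by
  let U₀ : V →ₗᵢ[ℂ] V := ⟨(R⁻¹ : ℂ) • T, fun ζ => by
    simp [norm_smul, hT, abs_of_pos hR, hR.ne']⟩
  exact ⟨U₀.toLinearIsometryEquiv rfl, fun ζ => by simp [U₀, smul_smul, hR.ne']⟩

lemma exists_eq_siegelDilation [FiniteDimensional ℂ V] {L : V × ℂ →ₗ[ℂ] V × ℂ}
    (hL : ∀ p, 0 < siegelHeight (L p) ↔ 0 < siegelHeight p) :
    ∃ R : ℝ, 0 < R ∧ ∃ U : V ≃ₗᵢ[ℂ] V, ∀ w, L w = siegelDilation R U w := by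
  obtain ⟨c, hc, T, hT, hLT⟩ := exists_eq_prod_map_of_forall_siegelHeight_pos_iff hL
  have hR : 0 < √c := Real.sqrt_pos.2 hc
  obtain ⟨U, hU⟩ := exists_linearIsometryEquiv_eq_smul T hR fun ζ => by
    rw [← Real.sqrt_sq (norm_nonneg _), hT, Real.sqrt_mul hc.le, Real.sqrt_sq (norm_nonneg _)]
  refine ⟨√c, hR, U, fun w => ?_⟩
  rw [siegelDilation_apply, ← hU, ← ofReal_pow, Real.sq_sqrt hc.le, ← hLT]

end

/-- classification of the linear automorphisms of the Siegel
upper half-space. -/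
theorem stmt_5 (n : ℕ)
    (A : EuclideanSpace ℂ (Fin n) × ℂ → EuclideanSpace ℂ (Fin n) × ℂ) :
    (IsLinearMap ℂ A ∧ Function.Bijective A ∧ A '' SiegelU n = SiegelU n) ↔
      ∃ R : ℝ, 0 < R ∧
        ∃ U : EuclideanSpace ℂ (Fin n) ≃ₗᵢ[ℂ] EuclideanSpace ℂ (Fin n),
          ∀ (ζ : EuclideanSpace ℂ (Fin n)) (z : ℂ),
            A (ζ, z) = (R • U ζ, (R : ℂ) ^ 2 * z) := by
  have hsmul (R : ℝ) (ζ : EuclideanSpace ℂ (Fin n)) : R • ζ = (R : ℂ) • ζ :=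
    RCLike.real_smul_eq_coe_smul R ζ
  constructor
  · rintro ⟨hlin, hbij, himg⟩
    obtain ⟨R, hR, U, hA⟩ := exists_eq_siegelDilation (L := hlin.mk' A) fun p => by
      simpa only [mem_siegelU_iff, IsLinearMap.mk'_apply] using
        (Set.image_eq_self_iff_forall_mem_iff hbij).1 himg p
    exact ⟨R, hR, U, fun ζ z => by rw [hsmul]; exact hA (ζ, z)⟩
  · rintro ⟨R, hR, U, hA⟩
    obtain rfl : A = siegelDilation R U := funext fun w => by rw [hA w.1 w.2, hsmul]; rfl
    have hbij := siegelDilation_bijective hR.ne' U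
    refine ⟨(siegelDilation R U).isLinear, hbij,
      (Set.image_eq_self_iff_forall_mem_iff hbij).2 fun p => ?_⟩
    simp only [mem_siegelU_iff, siegelHeight_siegelDilation]
    exact mul_pos_iff_of_pos_left (by positivity)
end
end

section
/- Let n ∈ ℕ and let 𝒰_{n+1} := {(ζ,z) ∈ ℂ^n × ℂ : Im z > ‖ζ‖²}. Let A : ℂ^n × ℂ → ℂ^n × ℂ be an affine bijection (A(v) = L(v) + b with L a ℂ-linear bijection and b ∈ ℂ^n × ℂ) such that A(𝒰_{n+1}) = 𝒰_{n+1}. Then there exist (ζ₀,x) ∈ ℂ^n × ℝ, R > 0 and a unitary operator U on ℂ^n such that A(ζ,z) = (ζ₀ + R·Uζ, R²·z + x + i‖ζ₀‖² + 2i⟨R·Uζ|ζ₀⟩) for all (ζ,z); conversely, every map of this form is an affine bijection preserving 𝒰_{n+1}. In other words, the group of affine automorphisms of 𝒰_{n+1} is the semi-direct product of the Heisenberg translations τ_{(ζ₀,x)} and the linear automorphisms (ζ,z) ↦ (R·Uζ, R²·z). -/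
/-!
With `ρ(ζ, z) = Im z - ‖ζ‖²`, the model map `(ζ, z) ↦ τ_{(ζ₀,x)}(R U ζ, R² z)` satisfies
`ρ ∘ A = R² ρ`, so it preserves `𝒰 = {ρ > 0}`. Conversely, an affine automorphism of `𝒰` is a
homeomorphism, so it maps the boundary `{ρ = 0}` into itself. Along the boundary points
`(t ζ, x + i t² ‖ζ‖²)` the function `ρ ∘ A` is a real quadratic polynomial in `x` and in `t`,
vanishing identically; its coefficients force the linear part to be
`(ζ, z) ↦ (T ζ, c z + 2i⟨T ζ|ζ₀⟩)` with `c` real and `‖T ζ‖² = c ‖ζ‖²`, and the translation part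
to lie on the boundary. The interior point `(0, i)` gives `c > 0`, and `T / √c` is unitary.
-/

noncomputable section

open Complex

open Set

variable {E : Type*} [NormedAddCommGroup E]

def siegelDefining (w : E × ℂ) : ℝ := w.2.im - ‖w.1‖ ^ 2

theorem siegelU_eq_setOf (n : ℕ) : SiegelU n = {w | 0 < siegelDefining w} := by
  ext w
  simp [SiegelU, siegelDefining]

theorem continuous_siegelDefining : Continuous (siegelDefining (E := E)) := by
  unfold siegelDefining
  fun_prop

variable [InnerProductSpace ℂ E]

theorem siegelDefining_add (w u : E × ℂ) :
    siegelDefining (w + u) =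
      siegelDefining w + u.2.im - 2 * re (inner ℂ w.1 u.1) - ‖u.1‖ ^ 2 := by
  simp only [siegelDefining, Prod.fst_add, Prod.snd_add, add_im, norm_add_sq (𝕜 := ℂ),
    RCLike.re_to_complex]
  ring

theorem siegelDefining_add_ofReal_smul (w u : E × ℂ) (t : ℝ) :
    siegelDefining (w + (t : ℂ) • u) = siegelDefining w
      + t * (u.2.im - 2 * re (inner ℂ w.1 u.1)) - t ^ 2 * ‖u.1‖ ^ 2 := by
  rw [siegelDefining_add]
  simp only [Prod.smul_fst, Prod.smul_snd, smul_eq_mul, inner_smul_right, re_ofReal_mul,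
    im_ofReal_mul, norm_smul, norm_real, Real.norm_eq_abs, mul_pow, sq_abs]
  ring

theorem frontier_setOf_siegelDefining_pos :
    frontier {w : E × ℂ | 0 < siegelDefining w} = {w | siegelDefining w = 0} := by
  refine (frontier_lt_subset_eq continuous_const continuous_siegelDefining).trans
    (fun w hw => hw.symm) |>.antisymm fun w (hw : siegelDefining w = 0) => ?_
  rw [(isOpen_lt continuous_const continuous_siegelDefining).frontier_eq]
  refine ⟨?_, fun h => (ne_of_gt h) hw⟩
  set γ : ℝ → E × ℂ := fun t => w + ((0 : E), (t : ℂ) * I)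
  have hγ : γ 0 ∈ closure (γ '' Ioi 0) :=
    (by fun_prop : Continuous γ).continuousWithinAt.mem_closure_image (by simp)
  have hw' : γ 0 = w := by simp [γ]
  refine hw' ▸ closure_mono ?_ hγ
  rintro _ ⟨t, ht, rfl⟩
  simpa [γ, siegelDefining_add, hw] using ht

theorem mapsTo_siegelBoundary_of_image_eq (h : E × ℂ ≃ₜ E × ℂ)
    (hS : h '' {w | 0 < siegelDefining w} = {w | 0 < siegelDefining w}) :
    MapsTo h {w | siegelDefining w = 0} {w | siegelDefining w = 0} := by
  intro v hv
  rw [← frontier_setOf_siegelDefining_pos] at hv ⊢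
  rw [← hS, ← h.image_frontier]
  exact mem_image_of_mem h hv

theorem quadratic_coeffs_eq_zero {a b c : ℝ} (h : ∀ t : ℝ, a * t ^ 2 + b * t + c = 0) :
    a = 0 ∧ b = 0 ∧ c = 0 := by
  have h0 := h 0
  have h1 := h 1
  have h2 := h (-1)
  refine ⟨?_, ?_, ?_⟩ <;> linarith

theorem LinearMap.ext_of_im {V : Type*} [AddCommGroup V] [Module ℂ V] {f g : V →ₗ[ℂ] ℂ}
    (h : ∀ v, (f v).im = (g v).im) : f = g := by
  ext v
  refine Complex.ext ?_ (h v)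
  simpa using h (I • v)

/-- `inner ℂ ζ₀ v` is the paper's `⟨v|ζ₀⟩`. -/
def siegelAffine (ζ₀ : E) (x R : ℝ) (U : E ≃ₗᵢ[ℂ] E) (w : E × ℂ) : E × ℂ :=
  (ζ₀ + R • U w.1,
    (R : ℂ) ^ 2 * w.2 + (x : ℂ) + I * ((‖ζ₀‖ ^ 2 : ℝ) : ℂ) + 2 * I * inner ℂ ζ₀ (R • U w.1))

def siegelLinear (ζ₀ : E) (R : ℝ) (U : E ≃ₗᵢ[ℂ] E) : E × ℂ →ₗ[ℂ] E × ℂ :=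
  LinearMap.prod ((R : ℂ) • U.toLinearMap ∘ₗ LinearMap.fst ℂ E ℂ)
    ((R : ℂ) ^ 2 • LinearMap.snd ℂ E ℂ
      + (2 * I * R) • innerₛₗ ℂ ζ₀ ∘ₗ U.toLinearMap ∘ₗ LinearMap.fst ℂ E ℂ)

theorem siegelAffine_apply (ζ₀ : E) (x R : ℝ) (U : E ≃ₗᵢ[ℂ] E) (w : E × ℂ) :
    siegelAffine ζ₀ x R U w = siegelLinear ζ₀ R U w + (ζ₀, x + I * ((‖ζ₀‖ ^ 2 : ℝ) : ℂ)) := by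
  simp only [siegelAffine, siegelLinear, RCLike.real_smul_eq_coe_smul (K := ℂ), inner_smul_right]
  ext
  · simp [add_comm]
  · simp
    ring

theorem siegelLinear_injective (ζ₀ : E) {R : ℝ} (hR : 0 < R) (U : E ≃ₗᵢ[ℂ] E) :
    Function.Injective (siegelLinear ζ₀ R U) := by
  refine (injective_iff_map_eq_zero _).mpr fun ⟨ζ, z⟩ h => ?_
  simp only [siegelLinear, LinearMap.prod_apply, Function.prod, Prod.mk_eq_zero] at h
  have hζ : ζ = 0 := by simpa [hR.ne'] using h.1
  subst hζ
  simpa [hR.ne'] using h.2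

theorem siegelDefining_siegelAffine (ζ₀ : E) (x : ℝ) {R : ℝ} (hR : 0 ≤ R) (U : E ≃ₗᵢ[ℂ] E)
    (w : E × ℂ) : siegelDefining (siegelAffine ζ₀ x R U w) = R ^ 2 * siegelDefining w := by
  simp only [siegelDefining, siegelAffine, norm_add_sq (𝕜 := ℂ), norm_smul, U.norm_map,
    RCLike.re_to_complex, RCLike.real_smul_eq_coe_smul (K := ℂ), inner_smul_right]
  simp [mul_im, ← ofReal_pow, abs_of_nonneg hR]
  ring

theorem image_siegelAffine [FiniteDimensional ℂ E] (ζ₀ : E) (x : ℝ) {R : ℝ} (hR : 0 < R)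
    (U : E ≃ₗᵢ[ℂ] E) :
    siegelAffine ζ₀ x R U '' {w | 0 < siegelDefining w} = {w | 0 < siegelDefining w} := by
  have hsurj : Function.Surjective (siegelAffine ζ₀ x R U) := by
    intro w
    obtain ⟨v, hv⟩ := LinearMap.injective_iff_surjective.mp (siegelLinear_injective ζ₀ hR U)
      (w - (ζ₀, x + I * ((‖ζ₀‖ ^ 2 : ℝ) : ℂ)))
    exact ⟨v, by rw [siegelAffine_apply, hv, sub_add_cancel]⟩
  have hpre : siegelAffine ζ₀ x R U ⁻¹' {w | 0 < siegelDefining w} =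
      {w | 0 < siegelDefining w} := by
    ext w
    simp [siegelDefining_siegelAffine ζ₀ x hR.le, pow_pos hR]
  simpa only [hpre] using Set.image_preimage_eq {w | 0 < siegelDefining w} hsurj

theorem LinearMap.map_mk_eq_add_smul {F : Type*} [AddCommGroup F] [Module ℂ F]
    (L : E × ℂ →ₗ[ℂ] F) (ζ : E) (z : ℂ) : L (ζ, z) = L (ζ, 0) + z • L (0, 1) := by
  rw [← map_smul, ← map_add]
  simp

theorem LinearMap.exists_linearIsometryEquiv_of_norm_map_eq_mul [FiniteDimensional ℂ E]
    (T : E →ₗ[ℂ] E) {R : ℝ} (hR : 0 < R) (hT : ∀ ζ, ‖T ζ‖ = R * ‖ζ‖) :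
    ∃ U : E ≃ₗᵢ[ℂ] E, ∀ ζ, R • U ζ = T ζ := by
  have hR' : (R : ℂ) ≠ 0 := ofReal_ne_zero.mpr hR.ne'
  let U : E →ₗᵢ[ℂ] E :=
    { toLinearMap := (R : ℂ)⁻¹ • T
      norm_map' := fun ζ => by
        simp [norm_smul, hT, abs_of_pos hR, hR.ne'] }
  refine ⟨U.toLinearIsometryEquiv rfl, fun ζ => ?_⟩
  simp [U, RCLike.real_smul_eq_coe_smul (K := ℂ), smul_smul, hR']

section Boundary

variable (L : E × ℂ →ₗ[ℂ] E × ℂ) (b : E × ℂ)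

theorem map_zero_one_of_mapsTo_siegelBoundary
    (hbd : MapsTo (L · + b) {v | siegelDefining v = 0} {v | siegelDefining v = 0}) :
    (L (0, 1)).1 = 0 ∧ (L (0, 1)).2.im = 0 ∧ siegelDefining b = 0 := by
  have key : ∀ t : ℝ, -‖(L (0, 1)).1‖ ^ 2 * t ^ 2
      + ((L (0, 1)).2.im - 2 * re (inner ℂ b.1 (L (0, 1)).1)) * t + siegelDefining b = 0 := by
    intro t
    have h : siegelDefining (L (0, t) + b) = 0 := hbd (by simp [siegelDefining])
    rw [show ((0 : E), (t : ℂ)) = (t : ℂ) • ((0 : E), (1 : ℂ)) by simp, map_smul, add_comm,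
      siegelDefining_add_ofReal_smul] at h
    linarith
  obtain ⟨hnorm, hc, hb⟩ := quadratic_coeffs_eq_zero key
  have hα : (L (0, 1)).1 = 0 := by simpa using hnorm
  exact ⟨hα, by simpa [hα] using hc, hb⟩

theorem map_mk_zero_of_mapsTo_siegelBoundary
    (hbd : MapsTo (L · + b) {v | siegelDefining v = 0} {v | siegelDefining v = 0})
    (hα : (L (0, 1)).1 = 0) (hc : (L (0, 1)).2.im = 0) (hb : siegelDefining b = 0) (ζ : E) :
    ‖(L (ζ, 0)).1‖ ^ 2 = (L (0, 1)).2.re * ‖ζ‖ ^ 2 ∧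
      (L (ζ, 0)).2.im = 2 * re (inner ℂ b.1 (L (ζ, 0)).1) := by
  have key : ∀ t : ℝ, ((L (0, 1)).2.re * ‖ζ‖ ^ 2 - ‖(L (ζ, 0)).1‖ ^ 2) * t ^ 2
      + ((L (ζ, 0)).2.im - 2 * re (inner ℂ b.1 (L (ζ, 0)).1)) * t + 0 = 0 := by
    intro t
    have h : siegelDefining (L ((t : ℂ) • ζ, I * ((t ^ 2 * ‖ζ‖ ^ 2 : ℝ) : ℂ)) + b) = 0 :=
      hbd (by simp [siegelDefining, norm_smul, mul_pow, -ofReal_pow])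
    rw [LinearMap.map_mk_eq_add_smul, ← smul_zero (t : ℂ), ← Prod.smul_mk, map_smul,
      add_right_comm, add_comm _ b, siegelDefining_add, siegelDefining_add_ofReal_smul] at h
    simp [hα, hc, hb, mul_im, -ofReal_pow] at h
    linarith
  obtain ⟨h2, h1, -⟩ := quadratic_coeffs_eq_zero key
  constructor <;> linarith

theorem snd_map_mk_zero_of_mapsTo_siegelBoundary
    (hbd : MapsTo (L · + b) {v | siegelDefining v = 0} {v | siegelDefining v = 0})
    (hα : (L (0, 1)).1 = 0) (hc : (L (0, 1)).2.im = 0) (hb : siegelDefining b = 0) (ζ : E) :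
    (L (ζ, 0)).2 = 2 * I * inner ℂ b.1 (L (ζ, 0)).1 := by
  let T := LinearMap.fst ℂ E ℂ ∘ₗ L ∘ₗ LinearMap.inl ℂ E ℂ
  have h : LinearMap.snd ℂ E ℂ ∘ₗ L ∘ₗ LinearMap.inl ℂ E ℂ = (2 * I) • innerₛₗ ℂ b.1 ∘ₗ T :=
    LinearMap.ext_of_im fun ζ => by
      simpa [T, mul_im] using (map_mk_zero_of_mapsTo_siegelBoundary L b hbd hα hc hb ζ).2
  simpa [T, mul_assoc] using LinearMap.congr_fun h ζ

theorem exists_siegelAffine_of_mapsTo_siegelBoundary [FiniteDimensional ℂ E]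
    (hbd : MapsTo (L · + b) {v | siegelDefining v = 0} {v | siegelDefining v = 0})
    (hI : 0 < siegelDefining (L (0, I) + b)) :
    ∃ (ζ₀ : E) (x R : ℝ), 0 < R ∧ ∃ U : E ≃ₗᵢ[ℂ] E, ∀ w, L w + b = siegelAffine ζ₀ x R U w := by
  obtain ⟨hα, hc, hb⟩ := map_zero_one_of_mapsTo_siegelBoundary L b hbd
  set c := (L (0, 1)).2.re
  have hcpos : 0 < c := by
    rw [show ((0 : E), I) = I • ((0 : E), (1 : ℂ)) by simp, map_smul, add_comm,
      siegelDefining_add] at hI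
    simpa [hα, hb, mul_im] using hI
  have hR := Real.sqrt_pos.mpr hcpos
  obtain ⟨U, hTU⟩ := (LinearMap.fst ℂ E ℂ ∘ₗ L ∘ₗ LinearMap.inl ℂ E ℂ)
    |>.exists_linearIsometryEquiv_of_norm_map_eq_mul hR fun ζ => by
      have h := (map_mk_zero_of_mapsTo_siegelBoundary L b hbd hα hc hb ζ).1
      change ‖(L (ζ, 0)).1‖ = _
      rw [← Real.sqrt_sq (norm_nonneg _), h, Real.sqrt_mul hcpos.le, Real.sqrt_sq (norm_nonneg _)]
  refine ⟨b.1, b.2.re, √c, hR, U, fun ⟨ζ, z⟩ => ?_⟩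
  have hU : √c • U ζ = (L (ζ, 0)).1 := hTU ζ
  rw [LinearMap.map_mk_eq_add_smul]
  ext
  · simp [siegelAffine, hU, hα, add_comm]
  · have hc' : (L (0, 1)).2 = (c : ℂ) := Complex.ext rfl (by simpa using hc)
    have hb2 : b.2 = b.2.re + I * ((‖b.1‖ ^ 2 : ℝ) : ℂ) := by
      apply Complex.ext <;> simp [siegelDefining, -ofReal_pow] at hb ⊢
      linarith
    simp only [siegelAffine, Prod.snd_add, Prod.smul_snd, smul_eq_mul, hU, hc',
      snd_map_mk_zero_of_mapsTo_siegelBoundary L b hbd hα hc hb ζ, ← ofReal_pow,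
      Real.sq_sqrt hcpos.le]
    linear_combination hb2

end Boundary

theorem exists_siegelAffine_of_image_eq [FiniteDimensional ℂ E] (L : E × ℂ →ₗ[ℂ] E × ℂ)
    (hL : Function.Bijective L) (b : E × ℂ)
    (himg : (L · + b) '' {w | 0 < siegelDefining w} = {w | 0 < siegelDefining w}) :
    ∃ (ζ₀ : E) (x R : ℝ), 0 < R ∧ ∃ U : E ≃ₗᵢ[ℂ] E, ∀ w, L w + b = siegelAffine ζ₀ x R U w := by
  let h : E × ℂ ≃ₜ E × ℂ := (LinearEquiv.ofBijective L hL).toContinuousLinearEquiv.toHomeomorph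
    |>.trans (Homeomorph.addRight b)
  exact exists_siegelAffine_of_mapsTo_siegelBoundary L b (mapsTo_siegelBoundary_of_image_eq h himg)
    (himg.subset ⟨(0, I), by simp [siegelDefining], rfl⟩)

/-- classification of the affine automorphisms of the Siegel
upper half-space: they are exactly the compositions of Heisenberg translations
and linear automorphisms. Here `⟨a|b⟩` (linear in the first variable) is
`inner b a` in Mathlib's convention. -/
theorem stmt_6 (n : ℕ)
    (A : EuclideanSpace ℂ (Fin n) × ℂ → EuclideanSpace ℂ (Fin n) × ℂ) :
    ((∃ (L : EuclideanSpace ℂ (Fin n) × ℂ → EuclideanSpace ℂ (Fin n) × ℂ)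
        (b : EuclideanSpace ℂ (Fin n) × ℂ),
        IsLinearMap ℂ L ∧ Function.Bijective L ∧ ∀ v, A v = L v + b) ∧
      A '' SiegelU n = SiegelU n) ↔
      ∃ (ζ₀ : EuclideanSpace ℂ (Fin n)) (x : ℝ) (R : ℝ), 0 < R ∧
        ∃ U : EuclideanSpace ℂ (Fin n) ≃ₗᵢ[ℂ] EuclideanSpace ℂ (Fin n),
          ∀ (ζ : EuclideanSpace ℂ (Fin n)) (z : ℂ),
            A (ζ, z) = (ζ₀ + R • U ζ,
              (R : ℂ) ^ 2 * z + (x : ℂ) + Complex.I * ((‖ζ₀‖ ^ 2 : ℝ) : ℂ)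
                + 2 * Complex.I * (inner ℂ ζ₀ (R • U ζ) : ℂ)) := by
  rw [siegelU_eq_setOf]
  constructor
  · rintro ⟨⟨L, b, hL, hbij, hA⟩, himg⟩
    rw [funext hA] at himg
    obtain ⟨ζ₀, x, R, hR, U, h⟩ := exists_siegelAffine_of_image_eq (hL.mk' L) hbij b himg
    exact ⟨ζ₀, x, R, hR, U, fun ζ z => (hA _).trans (h _)⟩
  · rintro ⟨ζ₀, x, R, hR, U, hA⟩
    obtain rfl : A = siegelAffine ζ₀ x R U := funext fun w => hA w.1 w.2
    have hinj := siegelLinear_injective ζ₀ hR U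
    exact ⟨⟨siegelLinear ζ₀ R U, _, (siegelLinear ζ₀ R U).isLinear,
      ⟨hinj, LinearMap.injective_iff_surjective.mp hinj⟩, siegelAffine_apply ζ₀ x R U⟩,
      image_siegelAffine ζ₀ x hR U⟩
end
end

section
/- Let X be a complete seminormed complex vector space, let Y be a Fréchet space (a complete, metrizable, locally convex topological ℂ-vector space), and let j : X → Y be an injective linear map. Let G be a group of linear homeomorphisms of Y such that each g ∈ G maps j(X) onto j(X) and the induced linear map on X is continuous. Then the following are equivalent: (i) there exists a continuous linear functional L on Y such that L ∘ j is a nonzero continuous linear functional on X; (ii) there exists a closed linear subspace V of Y with g(V) = V for every g ∈ G, such that the map X → Y/V, x ↦ j(x) + V (where Y/V carries the quotient topology), is continuous and not identically zero. -/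
/-!
(i) ⇒ (ii): take for `V` the largest `G`-invariant subspace of `ker L`, the common kernel of the
functionals `L ∘ g`, `g ∈ G`. Each `L ∘ g ∘ j` is continuous on `X`, since `g` induces a bounded
operator on `X`. These functionals factor through `Y ⧸ V` and separate its points, so
`x ↦ j x + V` has a closed graph. As `Y ⧸ V` is again complete and metrizable, the closed graph
theorem for maps from a Banach space into an F-space (Baire category in `X`, then successive
approximation in `Y ⧸ V`) makes it continuous.

(ii) ⇒ (i): Hahn–Banach gives a continuous functional on `Y` that vanishes on `V` but not at
`j x₀`; it factors continuously through `Y ⧸ V`.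
-/

open Filter Set Metric Pointwise Topology Uniformity

theorem sub_mem_of_succ_sub_mem {G : Type*} [AddGroup G] {w : ℕ → Set G}
    (hw0 : ∀ n, (0 : G) ∈ w n) (hw : ∀ n, w (n + 1) + w (n + 1) ⊆ w n) {s : ℕ → G}
    (hs : ∀ n, s (n + 1) - s n ∈ w (n + 1)) (n k : ℕ) : s (n + k) - s n ∈ w n := by
  induction k generalizing n with
  | zero => simpa using hw0 n
  | succ k ih =>
    rw [← sub_add_sub_cancel _ (s (n + 1)), show n + (k + 1) = n + 1 + k by omega]
    exact hw n (add_mem_add (ih (n + 1)) (hs n))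

theorem cauchySeq_of_succ_sub_mem {G : Type*} [AddGroup G] [UniformSpace G]
    [IsUniformAddGroup G] {w : ℕ → Set G} (hb : (𝓝 (0 : G)).HasBasis (fun _ => True) w)
    (hw : ∀ n, w (n + 1) + w (n + 1) ⊆ w n) {s : ℕ → G}
    (hs : ∀ n, s (n + 1) - s n ∈ w (n + 1)) : CauchySeq s := by
  have hU : (𝓤 G).HasBasis (fun _ => True) fun n => {p : G × G | p.1 - p.2 ∈ w n} := by
    rw [uniformity_eq_comap_nhds_zero_swapped]
    exact hb.comap _
  rw [hU.cauchySeq_iff']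
  refine fun i _ => ⟨i, fun n hn => ?_⟩
  obtain ⟨k, rfl⟩ := Nat.exists_eq_add_of_le hn
  exact sub_mem_of_succ_sub_mem (w := w) (fun _ => mem_of_mem_nhds (hb.mem_of_mem trivial)) hw hs
    i k

theorem LinearMap.closure_preimage_mem_nhds_zero {𝕜 E F : Type*} [NontriviallyNormedField 𝕜]
    [AddCommGroup E] [Module 𝕜 E] [TopologicalSpace E] [IsTopologicalAddGroup E]
    [ContinuousConstSMul 𝕜 E] [BaireSpace E] [AddCommGroup F] [Module 𝕜 F] [TopologicalSpace F]
    [IsTopologicalAddGroup F] [ContinuousSMul 𝕜 F]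
    (f : E →ₗ[𝕜] F) {U : Set F} (hU : U ∈ 𝓝 (0 : F)) : closure (f ⁻¹' U) ∈ 𝓝 (0 : E) := by
  obtain ⟨W, hW, hWU⟩ := exists_nhds_half_neg hU
  obtain ⟨c, hc0, hc1⟩ := NormedField.exists_norm_lt_one 𝕜
  have hcn : ∀ n : ℕ, c ^ n ≠ 0 := fun n => pow_ne_zero n (norm_pos_iff.1 hc0)
  set C := closure (f ⁻¹' W)
  have hcover : ⋃ n : ℕ, (c ^ n)⁻¹ • C = univ := by
    refine eq_univ_of_forall fun x => mem_iUnion.2 ?_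
    have hlim : Tendsto (fun n : ℕ => c ^ n • f x) atTop (𝓝 0) := by
      simpa using (tendsto_pow_atTop_nhds_zero_of_norm_lt_one hc1).smul_const (f x)
    obtain ⟨n, hn⟩ := (hlim.eventually_mem hW).exists
    exact ⟨n, (mem_inv_smul_set_iff₀ (hcn n) _ x).2
      (subset_closure (by simpa using hn))⟩
  obtain ⟨n, hn⟩ := nonempty_interior_of_iUnion_of_closed
    (fun n => isClosed_closure.smul_of_ne_zero (inv_ne_zero (hcn n))) hcover
  obtain ⟨z, hz⟩ : (interior C).Nonempty := by
    rwa [interior_smul₀ (inv_ne_zero (hcn n)), smul_set_nonempty] at hn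
  have hzC : {e | z + e ∈ C} ∈ 𝓝 (0 : E) :=
    (continuous_const_add z).tendsto' 0 z (add_zero z) (mem_interior_iff_mem_nhds.1 hz)
  refine mem_of_superset hzC fun e he => ?_
  have : (z + e) - z ∈ closure (f ⁻¹' U) :=
    map_mem_closure₂ continuous_sub he (interior_subset hz) fun a ha b hb => by
      simpa using hWU _ ha _ hb
  simpa using this

section ClosedGraph

variable {𝕜 E F : Type*} [NontriviallyNormedField 𝕜] [SeminormedAddCommGroup E] [NormedSpace 𝕜 E]
  [AddCommGroup F] [Module 𝕜 F]

theorem LinearMap.exists_seq_of_ball_subset_closure_preimage [TopologicalSpace F]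
    (f : E →ₗ[𝕜] F) {w : ℕ → Set F} {δ : ℕ → ℝ} (hδ : ∀ n, 0 < δ n)
    (hball : ∀ n, ball (0 : E) (δ n) ⊆ closure (f ⁻¹' w (n + 1))) {x : E} (hx : ‖x‖ < δ 0) :
    ∃ t : ℕ → E, t 0 = 0 ∧ ∀ n, ‖x - t n‖ < δ n ∧ f (t (n + 1)) - f (t n) ∈ w (n + 1) := by
  have step : ∀ n y, ‖x - y‖ < δ n → ∃ y', ‖x - y'‖ < δ (n + 1) ∧ f y' - f y ∈ w (n + 1) := by
    intro n y hy
    obtain ⟨a, ha, hd⟩ :=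
      Metric.mem_closure_iff.1 (hball n (mem_ball_zero_iff.2 hy)) _ (hδ (n + 1))
    refine ⟨y + a, ?_, by simpa using ha⟩
    rwa [dist_eq_norm, sub_sub] at hd
  choose! next hnext using step
  let t : ℕ → E := fun n => Nat.rec 0 next n
  have ht : ∀ n, ‖x - t n‖ < δ n := by
    intro n
    induction n with
    | zero => simpa [t] using hx
    | succ n ih => exact (hnext n _ ih).1
  exact ⟨t, rfl, fun n => ⟨ht n, (hnext n _ (ht n)).2⟩⟩

theorem LinearMap.ball_subset_preimage_closure [UniformSpace F] [IsUniformAddGroup F]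
    [CompleteSpace F] (f : E →ₗ[𝕜] F)
    (hf : ∀ (u : ℕ → E) x y, Tendsto u atTop (𝓝 x) → Tendsto (f ∘ u) atTop (𝓝 y) → y = f x)
    {w : ℕ → Set F} (hb : (𝓝 (0 : F)).HasBasis (fun _ => True) w)
    (hw : ∀ n, w (n + 1) + w (n + 1) ⊆ w n) {δ : ℕ → ℝ} (hδ : ∀ n, 0 < δ n)
    (hδ0 : Tendsto δ atTop (𝓝 0)) (hball : ∀ n, ball (0 : E) (δ n) ⊆ closure (f ⁻¹' w (n + 1))) :
    ball (0 : E) (δ 0) ⊆ f ⁻¹' closure (w 0) := by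
  intro x hx
  obtain ⟨t, ht0, htx⟩ :=
    f.exists_seq_of_ball_subset_closure_preimage hδ hball (mem_ball_zero_iff.1 hx)
  obtain ⟨y, hy⟩ := cauchySeq_tendsto_of_complete
    (cauchySeq_of_succ_sub_mem (s := f ∘ t) hb hw fun n => (htx n).2)
  have ht : Tendsto t atTop (𝓝 x) := by
    rw [tendsto_iff_norm_sub_tendsto_zero]
    refine squeeze_zero (fun _ => norm_nonneg _) (fun n => ?_) hδ0
    rw [norm_sub_rev]
    exact (htx n).1.le
  rw [mem_preimage, ← hf t x y ht hy]
  refine mem_closure_of_tendsto hy (Eventually.of_forall fun n => ?_)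
  simpa [ht0] using sub_mem_of_succ_sub_mem (w := w) (s := f ∘ t)
    (fun n => mem_of_mem_nhds (hb.mem_of_mem trivial)) hw (fun n => (htx n).2) 0 n

theorem LinearMap.continuous_of_seq_closed_graph_of_complete [CompleteSpace E]
    [UniformSpace F] [IsUniformAddGroup F] [CompleteSpace F] [FirstCountableTopology F]
    [ContinuousSMul 𝕜 F] (f : E →ₗ[𝕜] F)
    (hf : ∀ (u : ℕ → E) x y, Tendsto u atTop (𝓝 x) → Tendsto (f ∘ u) atTop (𝓝 y) → y = f x) :
    Continuous f := by
  refine continuous_of_continuousAt_zero f fun U hU => ?_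
  rw [map_zero] at hU
  obtain ⟨U', ⟨hU'0, hU'⟩, hU'U⟩ := (closed_nhds_basis (0 : F)).mem_iff.1 hU
  obtain ⟨u, hu, hu2⟩ := IsTopologicalAddGroup.exists_antitone_basis_nhds_zero F
  obtain ⟨m, -, hm⟩ := hu.toHasBasis.mem_iff.1 hU'0
  have hw : (𝓝 (0 : F)).HasAntitoneBasis fun n => u (m + n) :=
    hu.comp_mono (monotone_const.add monotone_id)
      (by simpa [add_comm] using tendsto_add_atTop_nat m)
  choose δ hδ hball using fun n =>
    Metric.mem_nhds_iff.1 (f.closure_preimage_mem_nhds_zero (hw.mem (n + 1)))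
  set δ' : ℕ → ℝ := fun n => min (δ n) (1 / (n + 1))
  have hδ' : ∀ n, 0 < δ' n := fun n => lt_min (hδ n) Nat.one_div_pos_of_nat
  have hδ'0 : Tendsto δ' atTop (𝓝 0) := squeeze_zero (fun n => (hδ' n).le)
    (fun n => min_le_right _ _) tendsto_one_div_add_atTop_nhds_zero_nat
  have key := f.ball_subset_preimage_closure hf hw.toHasBasis (fun n => hu2 (m + n)) hδ' hδ'0
    fun n => (ball_subset_ball (min_le_left _ _)).trans (hball n)
  refine mem_map.2 (mem_of_superset (ball_mem_nhds 0 (hδ' 0)) fun x hx => ?_)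
  exact hU'U (closure_minimal hm hU' (key hx))

end ClosedGraph

theorem Submodule.mkQ_comp_seq_closed_graph_of_iInf_ker {ι 𝕜 X Y : Type*} [Ring 𝕜]
    [TopologicalSpace 𝕜] [T2Space 𝕜] [AddCommGroup X] [Module 𝕜 X] [TopologicalSpace X]
    [AddCommGroup Y] [Module 𝕜 Y] [TopologicalSpace Y] (φ : ι → StrongDual 𝕜 Y)
    (j : X →ₗ[𝕜] Y) (hφj : ∀ i, Continuous fun x => φ i (j x)) (u : ℕ → X) (x : X)
    (z : Y ⧸ ⨅ i, (φ i).ker) (hu : Tendsto u atTop (𝓝 x))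
    (hz : Tendsto (((⨅ i, (φ i).ker).mkQ ∘ₗ j) ∘ u) atTop (𝓝 z)) :
    z = ((⨅ i, (φ i).ker).mkQ ∘ₗ j) x := by
  obtain ⟨y, rfl⟩ := Submodule.mkQ_surjective _ z
  simp only [LinearMap.coe_comp, Function.comp_apply, Submodule.mkQ_apply,
    Submodule.Quotient.eq, Submodule.mem_iInf, LinearMap.mem_ker, map_sub, sub_eq_zero]
  intro i
  set ψ := (⨅ i, (φ i).ker).liftQL (φ i) (iInf_le _ i)
  refine tendsto_nhds_unique ((ψ.continuous.tendsto _).comp hz) ?_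
  exact ((hφj i).tendsto x).comp hu

section OrbitKer

variable {𝕜 Y : Type*} [Ring 𝕜] [TopologicalSpace 𝕜] [AddCommGroup Y] [Module 𝕜 Y]
  [TopologicalSpace Y]

def orbitKer (G : Subgroup (Y ≃L[𝕜] Y)) (L : StrongDual 𝕜 Y) : Submodule 𝕜 Y :=
  ⨅ g : G, (L.comp (g : Y ≃L[𝕜] Y).toContinuousLinearMap).ker

variable {G : Subgroup (Y ≃L[𝕜] Y)} {L : StrongDual 𝕜 Y}

theorem mem_orbitKer {y : Y} : y ∈ orbitKer G L ↔ ∀ g ∈ G, L (g y) = 0 := by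
  simp [orbitKer, Submodule.mem_iInf]

theorem isClosed_orbitKer [T1Space 𝕜] : IsClosed (orbitKer G L : Set Y) := by
  rw [orbitKer, Submodule.coe_iInf]
  exact isClosed_iInter fun g => ContinuousLinearMap.isClosed_ker _

theorem image_orbitKer {g : Y ≃L[𝕜] Y} (hg : g ∈ G) : g '' orbitKer G L = orbitKer G L := by
  have hmaps : ∀ h ∈ G, MapsTo h (orbitKer G L) (orbitKer G L) := fun h hh y hy =>
    mem_orbitKer.2 fun k hk => mem_orbitKer.1 hy (k * h) (G.mul_mem hk hh)
  refine (hmaps g hg).image_subset.antisymm fun y hy => ⟨g.symm y, ?_, g.apply_symm_apply y⟩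
  exact hmaps g⁻¹ (G.inv_mem hg) hy

end OrbitKer

theorem LinearMap.continuous_comp_of_exists_preimage_le {𝕜 X Y F : Type*} [Ring 𝕜]
    [SeminormedAddCommGroup X] [Module 𝕜 X] [AddCommGroup Y] [Module 𝕜 Y]
    [SeminormedAddCommGroup F] [Module 𝕜 F] (φ : Y →ₗ[𝕜] F) (j : X →ₗ[𝕜] Y) (T : Y →ₗ[𝕜] Y)
    {C₀ C : ℝ} (hφ : ∀ x, ‖φ (j x)‖ ≤ C₀ * ‖x‖)
    (hT : ∀ x, ∃ x', j x' = T (j x) ∧ ‖x'‖ ≤ C * ‖x‖) : Continuous fun x => φ (T (j x)) :=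
  AddMonoidHomClass.continuous_of_bound (φ ∘ₗ T ∘ₗ j) (|C₀| * C) fun x => by
    obtain ⟨x', hjx', hx'⟩ := hT x
    calc ‖φ (T (j x))‖ = ‖φ (j x')‖ := by rw [hjx']
      _ ≤ |C₀| * ‖x'‖ := (hφ x').trans (by gcongr; exact le_abs_self C₀)
      _ ≤ |C₀| * C * ‖x‖ := by rw [mul_assoc]; gcongr

theorem Submodule.exists_strongDual_le_ker_of_notMem {𝕜 E : Type*} [RCLike 𝕜]
    [TopologicalSpace E] [AddCommGroup E] [Module 𝕜 E] [Module ℝ E] [IsScalarTower ℝ 𝕜 E]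
    [IsTopologicalAddGroup E] [ContinuousSMul 𝕜 E] [LocallyConvexSpace ℝ E]
    (V : Submodule 𝕜 E) (hV : IsClosed (V : Set E)) {x : E} (hx : x ∉ V) :
    ∃ f : StrongDual 𝕜 E, V ≤ f.ker ∧ f x ≠ 0 := by
  obtain ⟨f, u, hfx, hfV⟩ :=
    RCLike.geometric_hahn_banach_point_closed (𝕜 := 𝕜) (V.restrictScalars ℝ).convex hV hx
  have hu : u < 0 := by simpa using hfV 0 V.zero_mem
  refine ⟨f, fun v hv => LinearMap.mem_ker.2 (by_contra fun hfv => ?_), fun hfx0 => ?_⟩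
  · -- `re ∘ f` is bounded below by `u` on `V`; rescaling `v` gives the value `u - 1`.
    have := hfV _ (V.smul_mem (((u : 𝕜) - 1) / f v) hv)
    rw [map_smul, smul_eq_mul, div_mul_cancel₀ _ (show f v ≠ 0 from hfv)] at this
    simp only [map_sub, RCLike.ofReal_re, RCLike.one_re] at this
    linarith
  · simp only [hfx0, map_zero] at hfx
    linarith

theorem stmt_17_general
    (X : Type*) [SeminormedAddCommGroup X] [NormedSpace ℂ X] [CompleteSpace X]
    (Y : Type*) [AddCommGroup Y] [Module ℂ Y] [UniformSpace Y] [IsUniformAddGroup Y]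
    [ContinuousSMul ℂ Y] [CompleteSpace Y] [TopologicalSpace.MetrizableSpace Y]
    [Module ℝ Y] [IsScalarTower ℝ ℂ Y] [LocallyConvexSpace ℝ Y]
    (j : X →ₗ[ℂ] Y)
    (G : Subgroup (Y ≃L[ℂ] Y))
    (hG1 : ∀ g ∈ G, (g : Y ≃L[ℂ] Y) '' Set.range j = Set.range j)
    (hG2 : ∀ g ∈ G, ∃ C : ℝ, 0 < C ∧ ∀ x x' : X, j x' = (g : Y ≃L[ℂ] Y) (j x) →
      ‖x'‖ ≤ C * ‖x‖) :
    (∃ L : Y →L[ℂ] ℂ,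
        (∃ C : ℝ, ∀ x : X, ‖L (j x)‖ ≤ C * ‖x‖) ∧ ∃ x : X, L (j x) ≠ 0) ↔
      (∃ V : Submodule ℂ Y, IsClosed (V : Set Y) ∧
        (∀ g ∈ G, (g : Y ≃L[ℂ] Y) '' (V : Set Y) = (V : Set Y)) ∧
        Continuous (fun x : X => (Submodule.Quotient.mk (j x) : Y ⧸ V)) ∧
        ∃ x : X, (Submodule.Quotient.mk (j x) : Y ⧸ V) ≠ 0) := by
  constructor
  · rintro ⟨L, ⟨C₀, hC₀⟩, x₀, hx₀⟩
    have hLgj : ∀ g : G, Continuous fun x => L (g.1 (j x)) := fun g => by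
      obtain ⟨C, -, hC⟩ := hG2 g g.2
      refine LinearMap.continuous_comp_of_exists_preimage_le (L : Y →ₗ[ℂ] ℂ) j
        (g.1 : Y →ₗ[ℂ] Y) (C := C) hC₀ fun x => ?_
      obtain ⟨x', hx'⟩ : g.1 (j x) ∈ range j := hG1 g g.2 ▸ mem_image_of_mem _ (mem_range_self x)
      exact ⟨x', hx', hC x x' hx'⟩
    set V := orbitKer G L
    let := IsTopologicalAddGroup.rightUniformSpace (Y ⧸ V)
    have := isUniformAddGroup_of_addCommGroup (G := Y ⧸ V)
    have : CompleteSpace (Y ⧸ V) := QuotientAddGroup.completeSpace_right Y V.toAddSubgroup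
    have : FirstCountableTopology (Y ⧸ V) :=
      inferInstanceAs (FirstCountableTopology (Y ⧸ V.toAddSubgroup))
    refine ⟨V, isClosed_orbitKer, fun g hg => image_orbitKer hg, ?_, x₀, ?_⟩
    · exact (V.mkQ ∘ₗ j).continuous_of_seq_closed_graph_of_complete
        (Submodule.mkQ_comp_seq_closed_graph_of_iInf_ker _ j hLgj)
    · rw [Ne, Submodule.Quotient.mk_eq_zero, mem_orbitKer]
      exact fun h => hx₀ (h 1 G.one_mem)
  · rintro ⟨V, hV, -, hcont, x₀, hx₀⟩
    obtain ⟨f, hVf, hfx₀⟩ := V.exists_strongDual_le_ker_of_notMem hV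
      (by rwa [Ne, Submodule.Quotient.mk_eq_zero] at hx₀)
    let K : X →L[ℂ] ℂ := ⟨f.toLinearMap ∘ₗ j, (V.liftQL f hVf).continuous.comp hcont⟩
    exact ⟨f, ⟨‖K‖, K.le_opNorm⟩, x₀, hfx₀⟩

/-- characterization of `Y`-decency. `X` is a complete seminormed
space, `Y` a Fréchet space, `j : X → Y` an injective linear map, and `G` a group
of linear homeomorphisms of `Y` preserving `j(X)` and inducing continuous maps
on `X`. -/
theorem stmt_17
    (X : Type*) [SeminormedAddCommGroup X] [NormedSpace ℂ X] [CompleteSpace X]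
    (Y : Type*) [AddCommGroup Y] [Module ℂ Y] [UniformSpace Y] [IsUniformAddGroup Y]
    [ContinuousSMul ℂ Y] [CompleteSpace Y] [TopologicalSpace.MetrizableSpace Y]
    [Module ℝ Y] [IsScalarTower ℝ ℂ Y] [LocallyConvexSpace ℝ Y]
    (j : X →ₗ[ℂ] Y) (hj : Function.Injective j)
    (G : Subgroup (Y ≃L[ℂ] Y))
    (hG1 : ∀ g ∈ G, (g : Y ≃L[ℂ] Y) '' Set.range j = Set.range j)
    (hG2 : ∀ g ∈ G, ∃ C : ℝ, 0 < C ∧ ∀ x x' : X, j x' = (g : Y ≃L[ℂ] Y) (j x) →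
      ‖x'‖ ≤ C * ‖x‖) :
    (∃ L : Y →L[ℂ] ℂ,
        (∃ C : ℝ, ∀ x : X, ‖L (j x)‖ ≤ C * ‖x‖) ∧ ∃ x : X, L (j x) ≠ 0) ↔
      (∃ V : Submodule ℂ Y, IsClosed (V : Set Y) ∧
        (∀ g ∈ G, (g : Y ≃L[ℂ] Y) '' (V : Set Y) = (V : Set Y)) ∧
        Continuous (fun x : X => (Submodule.Quotient.mk (j x) : Y ⧸ V)) ∧
        ∃ x : X, (Submodule.Quotient.mk (j x) : Y ⧸ V) ≠ 0) :=
  stmt_17_general X Y j G hG1 hG2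
end

section
/- Let Y be a separable Fréchet space (a complete, metrizable, locally convex, separable topological ℂ-vector space), let X be a semi-Hilbert space (a complex vector space with a positive semidefinite hermitian sesquilinear form, complete for the associated seminorm ‖·‖_X), and let j : X → Y be an injective linear map. Assume there exists a closed linear subspace V of Y such that j^{-1}(V) = {x ∈ X : ‖x‖_X = 0} and the map X → Y/V, x ↦ j(x) + V, is continuous for the quotient topology on Y/V. Then X is separable: there is a countable subset of X which is dense for the seminorm ‖·‖_X. -/
/-!
The Hilbert space `H = SeparationQuotient X` maps injectively by a continuous linear map `T` into
`Y ⧸ V`, which is second countable and whose continuous dual separates points (Hahn–Banach for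
the closed subspace `V`). If a Hilbert basis `(eᵢ)` of `H` were uncountable, then so would be its
image, and some `T eᵢ₀` would be an accumulation point of the image. But for every continuous
functional `ℓ` on `Y ⧸ V`, the numbers `ℓ (T eᵢ) = ⟪r, eᵢ⟫` (Riesz) tend to `0` along the cofinite
filter by Bessel's inequality, so `ℓ (T eᵢ₀) = 0` for all `ℓ`, contradicting `T eᵢ₀ ≠ 0`.
-/

open Topology Filter Set TopologicalSpace

theorem exists_accPt_of_not_countable {Z : Type*} [TopologicalSpace Z] [SecondCountableTopology Z]
    {A : Set Z} (hA : ¬ A.Countable) : ∃ a ∈ A, AccPt a (𝓟 A) := by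
  by_contra! h
  have : DiscreteTopology A :=
    discreteTopology_subtype_iff.2 fun a ha ↦ not_neBot.1 (h a ha)
  exact hA (separableSpace_iff_countable.1 inferInstance)

theorem Filter.cofinite_inf_principal_range_le_map {ι Z : Type*} (f : ι → Z) :
    cofinite ⊓ 𝓟 (range f) ≤ map f cofinite := by
  intro S hS
  rw [mem_inf_principal, mem_cofinite]
  refine (hS.image f).subset ?_
  rintro _ hx
  simp only [mem_compl_iff, mem_ofPred_eq, Classical.not_imp] at hx
  obtain ⟨⟨i, rfl⟩, hi⟩ := hx
  exact mem_image_of_mem f hi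

theorem AccPt.eq_of_tendsto_cofinite {ι Z W : Type*} [TopologicalSpace Z] [T1Space Z]
    [TopologicalSpace W] [T2Space W] {f : ι → Z} {a : Z} (ha : AccPt a (𝓟 (range f)))
    {g : Z → W} (hg : Continuous g) {c : W} (hgf : Tendsto (g ∘ f) cofinite (𝓝 c)) : g a = c := by
  have : NeBot (𝓝[≠] a ⊓ 𝓟 (range f)) := ha
  refine tendsto_nhds_unique (f := g) (l := 𝓝[≠] a ⊓ 𝓟 (range f)) ?_ ?_
  · exact (hg.tendsto a).mono_left (inf_le_left.trans nhdsWithin_le_nhds)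
  · refine (tendsto_map'_iff.2 hgf).mono_left ?_
    exact (inf_le_inf_right _ (nhdsNE_le_cofinite a)).trans (cofinite_inf_principal_range_le_map f)

theorem Orthonormal.tendsto_cofinite_apply_zero {𝕜 E ι : Type*} [RCLike 𝕜] [NormedAddCommGroup E]
    [InnerProductSpace 𝕜 E] [CompleteSpace E] {v : ι → E} (hv : Orthonormal 𝕜 v)
    (ψ : StrongDual 𝕜 E) : Tendsto (fun i ↦ ψ (v i)) cofinite (𝓝 0) := by
  set r := (InnerProductSpace.toDual 𝕜 E).symm ψ
  have hψ : ∀ i, ψ (v i) = inner 𝕜 r (v i) := fun i ↦ by simp [r]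
  rw [tendsto_zero_iff_norm_tendsto_zero]
  simpa [hψ, norm_inner_symm r] using (hv.inner_products_summable r).tendsto_cofinite_zero.sqrt

theorem HilbertBasis.separableSpace {𝕜 E ι : Type*} [RCLike 𝕜] [NormedAddCommGroup E]
    [InnerProductSpace 𝕜 E] [Countable ι] (b : HilbertBasis ι 𝕜 E) : SeparableSpace E := by
  rw [← isSeparable_univ_iff]
  simpa [← Submodule.topologicalClosure_coe, b.dense_span] using
    (countable_range b).isSeparable.span (R := 𝕜).closure

theorem separableSpace_of_injective_continuousLinearMap {𝕜 H Z : Type*} [RCLike 𝕜]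
    [NormedAddCommGroup H] [InnerProductSpace 𝕜 H] [CompleteSpace H] [AddCommGroup Z]
    [TopologicalSpace Z] [Module 𝕜 Z] [SecondCountableTopology Z] [SeparatingDual 𝕜 Z]
    {T : H →L[𝕜] Z} (hT : Function.Injective T) : SeparableSpace H := by
  have : T1Space Z := SeparatingDual.t1Space (R := 𝕜)
  obtain ⟨w, b, -⟩ := exists_hilbertBasis 𝕜 H
  suffices Countable w from b.separableSpace
  by_contra hw
  have hTb : Function.Injective (T ∘ b) := hT.comp b.orthonormal.linearIndependent.injective
  obtain ⟨_, ⟨i, rfl⟩, hacc⟩ := exists_accPt_of_not_countable fun h ↦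
    hw ((Equiv.ofInjective _ hTb).countable_iff.2 h.to_subtype)
  have hTbi : T (b i) ≠ 0 := (map_ne_zero_iff T hT).2 (b.orthonormal.ne_zero i)
  obtain ⟨ℓ, hℓ⟩ := SeparatingDual.exists_ne_zero (R := 𝕜) hTbi
  exact hℓ <| hacc.eq_of_tendsto_cofinite ℓ.continuous <|
    b.orthonormal.tendsto_cofinite_apply_zero (ℓ ∘L T)

theorem Submodule.separatingDual_quotient {𝕜 E : Type*} [RCLike 𝕜] [AddCommGroup E] [Module 𝕜 E]
    [TopologicalSpace E] [IsTopologicalAddGroup E] [ContinuousSMul 𝕜 E] [Module ℝ E]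
    [IsScalarTower ℝ 𝕜 E] [LocallyConvexSpace ℝ E] (V : Submodule 𝕜 E) (hV : IsClosed (V : Set E)) :
    SeparatingDual 𝕜 (E ⧸ V) := by
  refine ⟨fun q hq ↦ ?_⟩
  obtain ⟨y, rfl⟩ := V.mkQ_surjective q
  have hy : y ∉ V := by simpa using hq
  obtain ⟨f, u, hfy, hfV⟩ :=
    RCLike.geometric_hahn_banach_point_closed (𝕜 := 𝕜) (V.restrictScalars ℝ).convex hV hy
  have hu : u < 0 := by simpa using hfV 0 V.zero_mem
  have hreV : ∀ b ∈ V, RCLike.re (f b) = 0 := by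
    intro b hb
    by_contra hb0
    have := hfV _ (V.smul_mem ((u / RCLike.re (f b) : ℝ) : 𝕜) hb)
    rw [map_smul, smul_eq_mul, RCLike.re_ofReal_mul, div_mul_cancel₀ _ hb0] at this
    exact this.false
  have hV_ker : V ≤ f.ker := fun b hb ↦ by
    refine RCLike.ext_iff.2 ⟨by simpa using hreV b hb, ?_⟩
    have := hreV _ (V.smul_mem RCLike.I hb)
    rw [map_smul, smul_eq_mul, RCLike.I_mul_re, neg_eq_zero] at this
    simpa using this
  refine ⟨V.liftQL f hV_ker, fun hfy0 ↦ ?_⟩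
  simp only [coe_liftQL, ContinuousLinearMap.coe_coe, mkQ_apply, liftQ_apply] at hfy0
  rw [hfy0, map_zero] at hfy
  linarith

theorem stmt_19_general
    (X : Type*) [SeminormedAddCommGroup X] [NormedSpace ℂ X] [CompleteSpace X]
    (hpar : ∀ x y : X, ‖x + y‖ ^ 2 + ‖x - y‖ ^ 2 = 2 * ‖x‖ ^ 2 + 2 * ‖y‖ ^ 2)
    (Y : Type*) [AddCommGroup Y] [Module ℂ Y] [UniformSpace Y] [IsUniformAddGroup Y]
    [ContinuousSMul ℂ Y] [TopologicalSpace.MetrizableSpace Y]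
    [Module ℝ Y] [IsScalarTower ℝ ℂ Y] [LocallyConvexSpace ℝ Y]
    [TopologicalSpace.SeparableSpace Y]
    (j : X →ₗ[ℂ] Y)
    (V : Submodule ℂ Y) (hV : IsClosed (V : Set Y))
    (hVnull : ∀ x : X, j x ∈ V ↔ ‖x‖ = 0)
    (hcont : Continuous (fun x : X => (Submodule.Quotient.mk (j x) : Y ⧸ V))) :
    ∃ S : Set X, S.Countable ∧ ∀ x : X, ∀ ε : ℝ, 0 < ε → ∃ y ∈ S, ‖x - y‖ ≤ ε := by
  let H := SeparationQuotient X
  let : InnerProductSpace ℂ H := .ofNorm ℂ <| SeparationQuotient.surjective_mk.forall₂.2 fun x y ↦ by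
    rw [← SeparationQuotient.mk_add, ← SeparationQuotient.mk_sub, SeparationQuotient.norm_mk,
      SeparationQuotient.norm_mk, SeparationQuotient.norm_mk, SeparationQuotient.norm_mk]
    linarith [hpar x y]
  have : SecondCountableTopology Y := by
    let := pseudoMetrizableSpaceUniformity Y
    have := pseudoMetrizableSpaceUniformity_countably_generated Y
    exact UniformSpace.secondCountable_of_separable Y
  have : SecondCountableTopology (Y ⧸ V) :=
    inferInstanceAs (SecondCountableTopology (Y ⧸ V.toAddSubgroup))
  have := V.separatingDual_quotient hV
  let T : H →L[ℂ] Y ⧸ V :=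
    SeparationQuotient.liftCLM ⟨V.mkQ ∘ₗ j, hcont⟩ fun x y hxy ↦ (hxy.map hcont).eq
  have hT : Function.Injective T := by
    refine (injective_iff_map_eq_zero T).2 <| SeparationQuotient.surjective_mk.forall.2 fun x hx ↦ ?_
    rw [← norm_eq_zero, SeparationQuotient.norm_mk, ← hVnull, ← Submodule.Quotient.mk_eq_zero]
    exact hx
  have := separableSpace_of_injective_continuousLinearMap hT
  have : SecondCountableTopology X := SeparationQuotient.isInducing_mk.secondCountableTopology
  obtain ⟨S, hSc, hSd⟩ := exists_countable_dense X
  refine ⟨S, hSc, fun x ε hε ↦ ?_⟩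
  obtain ⟨y, hyS, hxy⟩ := Metric.mem_closure_iff.1 (hSd.closure_eq ▸ mem_univ x) ε hε
  exact ⟨y, hyS, (dist_eq_norm x y ▸ hxy).le⟩

/-- a strongly decent and saturated semi-Hilbert subspace of a
separable Fréchet space is separable. The semi-Hilbert space `X` is modeled as a
complete seminormed complex vector space satisfying the parallelogram law. -/
theorem stmt_19
    (X : Type*) [SeminormedAddCommGroup X] [NormedSpace ℂ X] [CompleteSpace X]
    (hpar : ∀ x y : X, ‖x + y‖ ^ 2 + ‖x - y‖ ^ 2 = 2 * ‖x‖ ^ 2 + 2 * ‖y‖ ^ 2)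
    (Y : Type*) [AddCommGroup Y] [Module ℂ Y] [UniformSpace Y] [IsUniformAddGroup Y]
    [ContinuousSMul ℂ Y] [CompleteSpace Y] [TopologicalSpace.MetrizableSpace Y]
    [Module ℝ Y] [IsScalarTower ℝ ℂ Y] [LocallyConvexSpace ℝ Y]
    [TopologicalSpace.SeparableSpace Y]
    (j : X →ₗ[ℂ] Y) (hj : Function.Injective j)
    (V : Submodule ℂ Y) (hV : IsClosed (V : Set Y))
    (hVnull : ∀ x : X, j x ∈ V ↔ ‖x‖ = 0)
    (hcont : Continuous (fun x : X => (Submodule.Quotient.mk (j x) : Y ⧸ V))) :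
    ∃ S : Set X, S.Countable ∧ ∀ x : X, ∀ ε : ℝ, 0 < ε → ∃ y ∈ S, ‖x - y‖ ≤ ε :=
  stmt_19_general X hpar Y j V hV hVnull hcont
end
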